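/- Let M be an infinite subset of ℕ, n ≥ 1 and ε > 0. Then there exists k ∈ ℕ such that for every finite subset F of M that is a maximal member of the Schreier family S_n (i.e., F ∈ S_n, and F ∪ {m} ∉ S_n for every m ∈ ℕ with m > max F) and satisfies k ≤ min F, there exists an (n,ε)-basic special convex combination x ∈ c_00(ℕ) with supp x = F. -/

import Mathlib

/-!
A maximal `F ∈ S_{n+1}` is the union of exactly `min F` successive blocks, each maximal in `S_n`:
split greedily, and use that the Schreier families are hereditary and spreading. Averaging with
equal weights the convex combinations that induction provides on the blocks gives `x` supported on
`F` with `x(G) ≤ (2^{n+1} - 1) / min F` for every `G ∈ S_n`. Indeed `G` is the union of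
`l ≤ min G` successive sets of `S_{n-1}`; only the first block meeting `G` can give it mass close
to `1`, while every later block starts beyond `min G ≥ l`, so it gives each of those sets mass at
most `(2^n - 1) / max (min F) (l + 1)`, and blocks and sets meet in at most `min F + l` pairs.
Hence for maximal sets of `S_n` any `k > (2^n - 1) / ε` works.
-/

/-- `E < F` for finite sets of naturals: every element of `E` is less than
every element of `F` (vacuously true if one of them is empty). -/
def FinsetLT (E F : Finset ℕ) : Prop := ∀ a ∈ E, ∀ b ∈ F, a < b

/-- The convolution `M * N` of two families of finite subsets of `ℕ`: it consists of `∅`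
together with all unions `E₁ ∪ … ∪ E_k` where `E₁ < … < E_k` are nonempty sets in `N`
and `{min E₁, …, min E_k} ∈ M`. -/
def SchreierConv (M N : Set (Finset ℕ)) : Set (Finset ℕ) :=
  {E | E = ∅ ∨ ∃ (k : ℕ) (Es : Fin k → Finset ℕ),
    (∀ i, Es i ∈ N) ∧ (∀ i, (Es i).Nonempty) ∧
    (∀ i j : Fin k, i < j → FinsetLT (Es i) (Es j)) ∧
    (Finset.image (fun i => sInf (↑(Es i) : Set ℕ)) Finset.univ) ∈ M ∧
    E = Finset.univ.biUnion Es}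

/-- The first Schreier family `S₁ = {E : #E ≤ min E} ∪ {∅}`. -/
def SchreierOne : Set (Finset ℕ) := {E | ∀ k ∈ E, E.card ≤ k}

/-- The Schreier families: `S₀` = singletons and `∅`, `S₁` as above,
`S_{n+1} = S₁ * S_n`. -/
def Schreier : ℕ → Set (Finset ℕ)
  | 0 => {E | E.card ≤ 1}
  | 1 => SchreierOne
  | n + 2 => SchreierConv SchreierOne (Schreier (n + 1))

/-- An `(n, ε)`-basic special convex combination: a convex combination `x` of the unit
vector basis of `c₀₀(ℕ)` with `supp x ∈ S_n` and `∑_{k ∈ G} x(k) < ε` for every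
`G ⊆ supp x` with `G ∈ S_{n-1}`. -/
def IsBSCCVec (n : ℕ) (ε : ℝ) (x : ℕ →₀ ℝ) : Prop :=
  (∀ k, 0 ≤ x k) ∧ (∑ k ∈ x.support, x k) = 1 ∧ x.support ∈ Schreier n ∧
  ∀ G ⊆ x.support, G ∈ Schreier (n - 1) → ∑ k ∈ G, x k < ε

open Finset

lemma Finset.nat_sInf_le {F : Finset ℕ} {a : ℕ} (ha : a ∈ F) : sInf (F : Set ℕ) ≤ a :=
  Nat.sInf_le (mem_coe.2 ha)

lemma Finset.nat_sInf_insert_of_lt {B : Finset ℕ} {x : ℕ} (hB : B.Nonempty)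
    (hx : ∀ a ∈ B, a < x) : sInf ((insert x B : Finset ℕ) : Set ℕ) = sInf (B : Set ℕ) := by
  rw [coe_insert, csInf_insert (OrderBot.bddBelow _) hB.to_set]
  exact min_eq_right (hx _ hB.csInf_mem).le

lemma Finset.nat_sInf_mono {F G : Finset ℕ} (h : G ⊆ F) (hG : G.Nonempty) :
    sInf (F : Set ℕ) ≤ sInf (G : Set ℕ) :=
  Finset.nat_sInf_le (h hG.csInf_mem)

lemma FinsetLT.mono {E E' F F' : Finset ℕ} (h : FinsetLT E F) (hE : E' ⊆ E) (hF : F' ⊆ F) :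
    FinsetLT E' F' :=
  fun a ha b hb => h a (hE ha) b (hF hb)

def blockUnion (L : List (Finset ℕ)) : Finset ℕ := L.foldr (· ∪ ·) ∅

@[simp] lemma blockUnion_nil : blockUnion [] = ∅ := rfl

@[simp] lemma blockUnion_cons (B : Finset ℕ) (L : List (Finset ℕ)) :
    blockUnion (B :: L) = B ∪ blockUnion L := rfl

@[simp] lemma mem_blockUnion {L : List (Finset ℕ)} {a : ℕ} :
    a ∈ blockUnion L ↔ ∃ B ∈ L, a ∈ B := by
  induction L with
  | nil => simp
  | cons B L ih => simp [ih]

@[simp] lemma blockUnion_append (L₁ L₂ : List (Finset ℕ)) :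
    blockUnion (L₁ ++ L₂) = blockUnion L₁ ∪ blockUnion L₂ := by
  induction L₁ with
  | nil => simp
  | cons B L ih => simp [ih, union_assoc]

@[simp] lemma blockUnion_singleton (B : Finset ℕ) : blockUnion [B] = B := union_empty B

lemma subset_blockUnion {L : List (Finset ℕ)} {B : Finset ℕ} (hB : B ∈ L) : B ⊆ blockUnion L :=
  fun _ ha => mem_blockUnion.2 ⟨B, hB, ha⟩

lemma blockUnion_ofFn {k : ℕ} (Es : Fin k → Finset ℕ) :
    blockUnion (List.ofFn Es) = univ.biUnion Es := by
  ext a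
  simp [List.mem_ofFn]

lemma card_blockUnion_le (L : List (Finset ℕ)) : #(blockUnion L) ≤ (L.map card).sum := by
  induction L with
  | nil => simp
  | cons B L ih =>
    simp only [blockUnion_cons, List.map_cons, List.sum_cons]
    exact (card_union_le _ _).trans (by omega)

lemma finsetLT_blockUnion_left {L : List (Finset ℕ)} {F : Finset ℕ} :
    FinsetLT (blockUnion L) F ↔ ∀ B ∈ L, FinsetLT B F := by
  simp only [FinsetLT, mem_blockUnion]
  grind

lemma finsetLT_blockUnion_right {L : List (Finset ℕ)} {F : Finset ℕ} :
    FinsetLT F (blockUnion L) ↔ ∀ B ∈ L, FinsetLT F B := by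
  simp only [FinsetLT, mem_blockUnion]
  grind

structure IsBlockSeq (𝒜 : Set (Finset ℕ)) (L : List (Finset ℕ)) : Prop where
  mem : ∀ B ∈ L, B ∈ 𝒜
  nonempty : ∀ B ∈ L, B.Nonempty
  pairwise : L.Pairwise FinsetLT

namespace IsBlockSeq

variable {𝒜 : Set (Finset ℕ)}

lemma nil : IsBlockSeq 𝒜 [] := ⟨by simp, by simp, List.Pairwise.nil⟩

lemma singleton {B : Finset ℕ} (hB : B ∈ 𝒜) (hne : B.Nonempty) : IsBlockSeq 𝒜 [B] :=
  ⟨by simpa using hB, by simpa using hne, List.pairwise_singleton _ _⟩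

lemma append_iff {L₁ L₂ : List (Finset ℕ)} :
    IsBlockSeq 𝒜 (L₁ ++ L₂) ↔
      IsBlockSeq 𝒜 L₁ ∧ IsBlockSeq 𝒜 L₂ ∧ FinsetLT (blockUnion L₁) (blockUnion L₂) := by
  simp only [finsetLT_blockUnion_left, finsetLT_blockUnion_right]
  constructor
  · rintro ⟨hmem, hne, hpw⟩
    obtain ⟨hpw₁, hpw₂, hlt⟩ := List.pairwise_append.1 hpw
    exact ⟨⟨fun B hB => hmem B (by simp [hB]), fun B hB => hne B (by simp [hB]), hpw₁⟩,
      ⟨fun B hB => hmem B (by simp [hB]), fun B hB => hne B (by simp [hB]), hpw₂⟩,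
      fun B hB C hC => hlt C hC B hB⟩
  · rintro ⟨h₁, h₂, hlt⟩
    refine ⟨?_, ?_, List.pairwise_append.2
      ⟨h₁.pairwise, h₂.pairwise, fun B hB C hC => hlt C hC B hB⟩⟩
    · simpa only [List.forall_mem_append] using ⟨h₁.mem, h₂.mem⟩
    · simpa only [List.forall_mem_append] using ⟨h₁.nonempty, h₂.nonempty⟩

lemma cons_iff {B : Finset ℕ} {L : List (Finset ℕ)} :
    IsBlockSeq 𝒜 (B :: L) ↔
      B ∈ 𝒜 ∧ B.Nonempty ∧ FinsetLT B (blockUnion L) ∧ IsBlockSeq 𝒜 L := by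
  rw [← List.singleton_append, append_iff]
  constructor
  · rintro ⟨h₁, h₂, h₃⟩
    exact ⟨h₁.mem B (by simp), h₁.nonempty B (by simp), by simpa using h₃, h₂⟩
  · rintro ⟨h₁, h₂, h₃, h₄⟩
    exact ⟨singleton h₁ h₂, h₄, by simpa using h₃⟩

lemma ofFn_iff {k : ℕ} {Es : Fin k → Finset ℕ} :
    IsBlockSeq 𝒜 (List.ofFn Es) ↔
      (∀ i, Es i ∈ 𝒜) ∧ (∀ i, (Es i).Nonempty) ∧ ∀ i j, i < j → FinsetLT (Es i) (Es j) := by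
  constructor
  · rintro ⟨hmem, hne, hpw⟩
    exact ⟨List.forall_mem_ofFn_iff.1 hmem, List.forall_mem_ofFn_iff.1 hne,
      fun _ _ hij => List.pairwise_ofFn.1 hpw hij⟩
  · rintro ⟨hmem, hne, hlt⟩
    exact ⟨List.forall_mem_ofFn_iff.2 hmem, List.forall_mem_ofFn_iff.2 hne,
      List.pairwise_ofFn.2 fun i j => hlt i j⟩

lemma get_lt {L : List (Finset ℕ)} (hL : IsBlockSeq 𝒜 L) {i j : Fin L.length} (hij : i < j) :
    FinsetLT (L.get i) (L.get j) :=
  List.pairwise_iff_get.1 hL.pairwise i j hij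

lemma restrict (h𝒜 : IsLowerSet 𝒜) {L : List (Finset ℕ)} (hL : IsBlockSeq 𝒜 L) {G : Finset ℕ}
    (hG : G ⊆ blockUnion L) :
    ∃ L', IsBlockSeq 𝒜 L' ∧ blockUnion L' = G ∧ L'.length ≤ L.length := by
  refine ⟨(L.map (G ∩ ·)).filter (·.Nonempty), ⟨?_, ?_, ?_⟩, ?_, ?_⟩
  · simp only [List.mem_filter, List.mem_map, decide_eq_true_eq]
    rintro _ ⟨⟨B, hB, rfl⟩, -⟩
    exact h𝒜 inter_subset_right (hL.mem B hB)
  · simp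
  · exact (List.pairwise_map.2 (hL.pairwise.imp fun h => h.mono inter_subset_right
      inter_subset_right)).filter _
  · ext a
    simp only [mem_blockUnion, List.mem_filter, List.mem_map, decide_eq_true_eq]
    constructor
    · rintro ⟨_, ⟨⟨B, -, rfl⟩, -⟩, ha⟩
      exact (mem_inter.1 ha).1
    · intro ha
      obtain ⟨B, hB, haB⟩ := mem_blockUnion.1 (hG ha)
      exact ⟨G ∩ B, ⟨⟨B, hB, rfl⟩, a, mem_inter.2 ⟨ha, haB⟩⟩, mem_inter.2 ⟨ha, haB⟩⟩
  · exact (List.length_filter_le _ _).trans (List.length_map _).le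

end IsBlockSeq

lemma mem_schreierOne_iff {F : Finset ℕ} : F ∈ SchreierOne ↔ #F ≤ sInf (F : Set ℕ) := by
  refine ⟨fun h => ?_, fun h k hk => h.trans (Finset.nat_sInf_le hk)⟩
  rcases F.eq_empty_or_nonempty with rfl | hF
  · simp
  · exact h _ hF.csInf_mem

lemma exists_singleton_blocks (F : Finset ℕ) :
    ∃ L, IsBlockSeq {E | #E ≤ 1} L ∧ blockUnion L = F ∧ L.length = #F := by
  refine ⟨(F.sort (· ≤ ·)).map ({·}), ⟨?_, ?_, ?_⟩, ?_, by simp⟩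
  · simp
  · simp
  · exact List.pairwise_map.2 ((F.sortedLT_sort).pairwise.imp fun h a ha b hb => by simp_all)
  · ext a
    simp

lemma card_blockUnion_le_length {L : List (Finset ℕ)} (hL : ∀ B ∈ L, #B ≤ 1) :
    #(blockUnion L) ≤ L.length := by
  refine (card_blockUnion_le L).trans ?_
  simpa using List.sum_le_card_nsmul (L.map card) 1 (by simpa using hL)

lemma mem_schreierConv_schreierOne_iff {𝒩 : Set (Finset ℕ)} {F : Finset ℕ} :
    F ∈ SchreierConv SchreierOne 𝒩 ↔
      ∃ L, IsBlockSeq 𝒩 L ∧ blockUnion L = F ∧ L.length ≤ sInf (F : Set ℕ) := by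
  constructor
  · rintro (rfl | ⟨k, Es, hmem, hne, hlt, hmins, rfl⟩)
    · exact ⟨[], .nil, rfl, by simp⟩
    refine ⟨List.ofFn Es, IsBlockSeq.ofFn_iff.2 ⟨hmem, hne, hlt⟩, blockUnion_ofFn Es, ?_⟩
    rw [List.length_ofFn]
    rcases Nat.eq_zero_or_pos k with rfl | hk
    · exact Nat.zero_le _
    have hinj : Function.Injective fun i => sInf (Es i : Set ℕ) := by
      intro i j hij
      by_contra hne'
      rcases lt_or_gt_of_ne hne' with h | h
      · exact (hlt i j h _ (hne i).csInf_mem _ (hne j).csInf_mem).ne hij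
      · exact (hlt j i h _ (hne j).csInf_mem _ (hne i).csInf_mem).ne hij.symm
    obtain ⟨a, ha⟩ := hne ⟨0, hk⟩
    refine le_csInf ⟨a, by simpa using ⟨_, ha⟩⟩ fun b hb => ?_
    obtain ⟨i, -, hbi⟩ := mem_biUnion.1 (mem_coe.1 hb)
    have hk_le := hmins _ (mem_image_of_mem _ (mem_univ i))
    rw [card_image_of_injective _ hinj, card_univ, Fintype.card_fin] at hk_le
    exact hk_le.trans (Finset.nat_sInf_le hbi)
  · rintro ⟨L, hL, rfl, hlen⟩
    obtain ⟨hmem, hne, hlt⟩ := (IsBlockSeq.ofFn_iff (Es := L.get)).1 (by rwa [List.ofFn_get])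
    refine Or.inr ⟨L.length, L.get, hmem, hne, hlt, fun v hv => ?_,
      by rw [← blockUnion_ofFn, List.ofFn_get]⟩
    obtain ⟨i, -, rfl⟩ := mem_image.1 hv
    calc #(univ.image fun i => sInf (L.get i : Set ℕ)) ≤ L.length :=
          card_image_le.trans (by simp)
      _ ≤ sInf (blockUnion L : Set ℕ) := hlen
      _ ≤ sInf (L.get i : Set ℕ) := Finset.nat_sInf_mono (subset_blockUnion (L.get_mem i)) (hne i)

/-- For `n = 0` this recasts `#F ≤ min F` as a union of singleton blocks, so that `S_1` obeys the
same recursion as the higher Schreier families. -/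
lemma mem_schreier_succ_iff {n : ℕ} {F : Finset ℕ} :
    F ∈ Schreier (n + 1) ↔
      ∃ L, IsBlockSeq (Schreier n) L ∧ blockUnion L = F ∧ L.length ≤ sInf (F : Set ℕ) := by
  cases n with
  | zero =>
    change F ∈ SchreierOne ↔ _
    rw [mem_schreierOne_iff]
    constructor
    · intro h
      obtain ⟨L, hL, hU, hlen⟩ := exists_singleton_blocks F
      exact ⟨L, hL, hU, hlen ▸ h⟩
    · rintro ⟨L, hL, rfl, hlen⟩
      exact (card_blockUnion_le_length hL.mem).trans hlen
  | succ n => exact mem_schreierConv_schreierOne_iff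

lemma empty_mem_schreier (n : ℕ) : (∅ : Finset ℕ) ∈ Schreier n := by
  cases n with
  | zero => simp [Schreier]
  | succ n => exact mem_schreier_succ_iff.2 ⟨[], .nil, rfl, by simp⟩

lemma singleton_mem_schreier {a : ℕ} (ha : 0 < a) : ∀ n, ({a} : Finset ℕ) ∈ Schreier n
  | 0 => by simp [Schreier]
  | n + 1 => mem_schreier_succ_iff.2
      ⟨[{a}], .singleton (singleton_mem_schreier ha n) (singleton_nonempty a), by simp,
        by simpa using Nat.one_le_iff_ne_zero.2 ha.ne'⟩

lemma isLowerSet_schreier : ∀ n, IsLowerSet (Schreier n)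
  | 0 => fun _ _ hGF hF => (card_le_card hGF).trans hF
  | n + 1 => by
    intro F G hGF hF
    rcases G.eq_empty_or_nonempty with rfl | hG
    · exact empty_mem_schreier _
    obtain ⟨L, hL, rfl, hlen⟩ := mem_schreier_succ_iff.1 hF
    obtain ⟨L', hL', hU, hlen'⟩ := hL.restrict (isLowerSet_schreier n) hGF
    exact mem_schreier_succ_iff.2
      ⟨L', hL', hU, hlen'.trans (hlen.trans (Finset.nat_sInf_mono hGF hG))⟩

lemma pos_of_mem_schreier {n : ℕ} {F : Finset ℕ} (hF : F ∈ Schreier (n + 1)) {a : ℕ}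
    (ha : a ∈ F) : 0 < a := by
  obtain ⟨L, -, rfl, hlen⟩ := mem_schreier_succ_iff.1 hF
  obtain ⟨B, hB, -⟩ := mem_blockUnion.1 ha
  exact (List.length_pos_of_mem hB).trans_le (hlen.trans (Finset.nat_sInf_le ha))

lemma union_erase_eq_of_union_eq_insert {U C B : Finset ℕ} {x : ℕ} (hlt : FinsetLT U C)
    (hC : C.Nonempty) (hx : ∀ a ∈ B, a < x) (hU : U ∪ C = insert x B) :
    x ∈ C ∧ U ∪ C.erase x = B := by
  obtain ⟨c, hc⟩ := hC
  have hxU : x ∉ U := fun h => by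
    rcases mem_insert.1 (hU ▸ mem_union_right U hc) with hcx | hcB
    · exact (hlt x h c hc).ne' hcx
    · exact ((hlt x h c hc).trans (hx c hcB)).false
  refine ⟨(mem_union.1 (hU ▸ mem_insert_self x B)).resolve_left hxU, ?_⟩
  rw [← erase_eq_of_notMem hxU, ← erase_union_distrib, hU,
    erase_insert fun h => (hx x h).false]

lemma insert_mem_schreier_of_insert_mem {n : ℕ} {B : Finset ℕ} {x y : ℕ}
    (hx : ∀ a ∈ B, a < x) (hy : ∀ a ∈ B, a < y) (hy0 : 0 < y)
    (hxB : insert x B ∈ Schreier n) : insert y B ∈ Schreier n := by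
  induction n generalizing B with
  | zero =>
    change #(insert y B) ≤ 1
    rwa [card_insert_of_notMem fun h => (hy y h).false,
      ← card_insert_of_notMem fun h => (hx x h).false]
  | succ n ih =>
    rcases B.eq_empty_or_nonempty with rfl | hB
    · exact singleton_mem_schreier hy0 _
    obtain ⟨L, hL, hU, hlen⟩ := mem_schreier_succ_iff.1 hxB
    rcases L.eq_nil_or_concat' with rfl | ⟨L₀, C, rfl⟩
    · exact absurd hU.symm (insert_ne_empty x B)
    obtain ⟨hL₀, hC, hlt⟩ := IsBlockSeq.append_iff.1 hL
    simp only [blockUnion_append, blockUnion_singleton] at hU hlt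
    obtain ⟨hxC, hUC⟩ := union_erase_eq_of_union_eq_insert hlt (hC.nonempty C (by simp)) hx hU
    have hCB : C.erase x ⊆ B := hUC ▸ subset_union_right
    have hD : insert y (C.erase x) ∈ Schreier n :=
      ih (fun a ha => hx a (hCB ha)) (fun a ha => hy a (hCB ha))
        (by rw [insert_erase hxC]; exact hC.mem C (by simp))
    refine mem_schreier_succ_iff.2 ⟨L₀ ++ [insert y (C.erase x)], ?_, ?_, ?_⟩
    · refine IsBlockSeq.append_iff.2 ⟨hL₀, .singleton hD (insert_nonempty _ _), ?_⟩
      rw [blockUnion_singleton]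
      intro a ha b hb
      rcases mem_insert.1 hb with rfl | hb
      · exact hy a (hUC ▸ mem_union_left _ ha)
      · exact hlt a ha b (mem_of_mem_erase hb)
    · rw [blockUnion_append, blockUnion_singleton, union_insert, hUC]
    · rw [Finset.nat_sInf_insert_of_lt hB hx] at hlen
      rw [Finset.nat_sInf_insert_of_lt hB hy]
      simpa using hlen

def IsSchreierMaximal (n : ℕ) (F : Finset ℕ) : Prop :=
  F ∈ Schreier n ∧ ∀ m, (∀ a ∈ F, a < m) → insert m F ∉ Schreier n

lemma IsSchreierMaximal.nonempty {n : ℕ} {F : Finset ℕ} (hF : IsSchreierMaximal n F) :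
    F.Nonempty := by
  rw [nonempty_iff_ne_empty]
  rintro rfl
  exact hF.2 1 (by simp) (singleton_mem_schreier one_pos n)

lemma IsBlockSeq.filter_le_max'_cons {𝒜 : Set (Finset ℕ)} {C : Finset ℕ}
    {L : List (Finset ℕ)} (hL : IsBlockSeq 𝒜 (C :: L)) (hC : C.Nonempty) :
    (blockUnion (C :: L)).filter (· ≤ C.max' hC) = C := by
  have hlt := (IsBlockSeq.cons_iff.1 hL).2.2.1
  ext a
  simp only [blockUnion_cons, mem_filter, mem_union]
  constructor
  · rintro ⟨ha | ha, hle⟩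
    · exact ha
    · exact absurd hle (not_le.2 (hlt _ (C.max'_mem hC) a ha))
  · exact fun ha => ⟨Or.inl ha, C.le_max' a ha⟩

lemma isSchreierMaximal_filter_le {n : ℕ} {F : Finset ℕ} {t f : ℕ} (hF : ∀ a ∈ F, 0 < a)
    (ht : F.filter (· ≤ t) ∈ Schreier n)
    (htmax : ∀ u ∈ F, F.filter (· ≤ u) ∈ Schreier n → u ≤ t)
    (hf : f ∈ F) (htf : t < f) (hnext : ∀ a ∈ F, t < a → f ≤ a) :
    IsSchreierMaximal n (F.filter (· ≤ t)) := by
  refine ⟨ht, fun m hm hmem => ?_⟩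
  have hins : insert f (F.filter (· ≤ t)) = F.filter (· ≤ f) := by
    ext a
    simp only [mem_insert, mem_filter]
    constructor
    · rintro (rfl | ⟨ha, hat⟩)
      · exact ⟨hf, le_rfl⟩
      · exact ⟨ha, hat.trans htf.le⟩
    · rintro ⟨ha, haf⟩
      rcases le_or_gt a t with hat | hat
      · exact Or.inr ⟨ha, hat⟩
      · exact Or.inl (le_antisymm haf (hnext a ha hat))
  have hfmem := insert_mem_schreier_of_insert_mem hm
    (fun a ha => (mem_filter.1 ha).2.trans_lt htf) (hF f hf) hmem
  exact (htmax f hf (hins ▸ hfmem)).not_gt htf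

lemma exists_max_filter_le_mem_schreier (n : ℕ) {F : Finset ℕ} (hne : F.Nonempty)
    (hF : ∀ a ∈ F, 0 < a) :
    ∃ t ∈ F, F.filter (· ≤ t) ∈ Schreier n ∧
      ∀ u ∈ F, F.filter (· ≤ u) ∈ Schreier n → u ≤ t := by
  classical
  set T := F.filter fun u => F.filter (· ≤ u) ∈ Schreier n
  have hT : T.Nonempty := by
    refine ⟨_, mem_filter.2 ⟨hne.csInf_mem, ?_⟩⟩
    convert singleton_mem_schreier (hF _ hne.csInf_mem) n
    ext a
    simp only [mem_filter, mem_singleton]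
    exact ⟨fun ⟨ha, hle⟩ => le_antisymm hle (Finset.nat_sInf_le ha),
      by rintro rfl; exact ⟨hne.csInf_mem, le_rfl⟩⟩
  obtain ⟨htF, ht⟩ := mem_filter.1 (T.max'_mem hT)
  exact ⟨T.max' hT, htF, ht, fun u hu h => T.le_max' u (mem_filter.2 ⟨hu, h⟩)⟩

lemma exists_blocks_filter_not_le {n : ℕ} {F : Finset ℕ} {t : ℕ}
    (htmax : ∀ u ∈ F, F.filter (· ≤ u) ∈ Schreier n → u ≤ t) (hne : F.Nonempty)
    {L : List (Finset ℕ)} (hL : IsBlockSeq (Schreier n) L) (hU : blockUnion L = F) :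
    ∃ L', IsBlockSeq (Schreier n) L' ∧ blockUnion L' = F.filter (fun a => ¬a ≤ t) ∧
      L'.length + 1 ≤ L.length := by
  rcases L with _ | ⟨C, Cs⟩
  · exact absurd hU.symm hne.ne_empty
  have hC := hL.nonempty C (by simp)
  have hCt : C.max' hC ≤ t :=
    htmax _ (hU ▸ subset_blockUnion (by simp) (C.max'_mem hC))
      (by rw [← hU, hL.filter_le_max'_cons hC]; exact hL.mem C (by simp))
  have hrest : F.filter (fun a => ¬a ≤ t) ⊆ blockUnion Cs := by
    intro a ha
    obtain ⟨haF, hat⟩ := mem_filter.1 ha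
    rw [← hU, blockUnion_cons, mem_union] at haF
    exact haF.resolve_left fun haC => hat ((C.le_max' a haC).trans hCt)
  obtain ⟨L', hL', hU', hlen'⟩ :=
    (IsBlockSeq.cons_iff.1 hL).2.2.2.restrict (isLowerSet_schreier n) hrest
  exact ⟨L', hL', hU', by simpa using hlen'⟩

/-- The blocks are found greedily: split off the longest initial segment of `F` lying in `S_n`,
then recurse on the rest. -/
lemma exists_greedy_blocks (n : ℕ) (F : Finset ℕ) (hF : ∀ a ∈ F, 0 < a) :
    ∃ L, IsBlockSeq (Schreier n) L ∧ blockUnion L = F ∧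
      (∀ B ∈ L.dropLast, IsSchreierMaximal n B) ∧
      ∀ L', IsBlockSeq (Schreier n) L' → blockUnion L' = F → L.length ≤ L'.length := by
  induction F using Finset.strongInduction with
  | H F ih =>
  classical
  rcases F.eq_empty_or_nonempty with rfl | hne
  · exact ⟨[], .nil, rfl, by simp, by simp⟩
  obtain ⟨t, htF, ht, htmax⟩ := exists_max_filter_le_mem_schreier n hne hF
  set rest := F.filter fun a => ¬a ≤ t
  obtain ⟨Lr, hLr, hUr, hmaxr, hminr⟩ :=
    ih rest (filter_ssubset.2 ⟨t, htF, not_not.2 le_rfl⟩) fun a ha => hF a (mem_filter.1 ha).1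
  have hlt : FinsetLT (F.filter (· ≤ t)) (blockUnion Lr) := hUr ▸ fun a ha b hb =>
    (mem_filter.1 ha).2.trans_lt (not_le.1 (mem_filter.1 hb).2)
  refine ⟨F.filter (· ≤ t) :: Lr,
    IsBlockSeq.cons_iff.2 ⟨ht, ⟨t, mem_filter.2 ⟨htF, le_rfl⟩⟩, hlt, hLr⟩,
    by rw [blockUnion_cons, hUr, filter_union_filter_not_eq], ?_, fun L' hL' hU' => ?_⟩
  · rcases Lr.eq_nil_or_concat' with rfl | ⟨L₁, B, rfl⟩
    · simp
    have hrest : rest.Nonempty :=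
      hUr ▸ (hLr.nonempty B (by simp)).mono (subset_blockUnion (by simp))
    rw [← List.cons_append, List.dropLast_concat]
    intro C hC
    rcases List.mem_cons.1 hC with rfl | hC
    · obtain ⟨hfF, hft⟩ := mem_filter.1 (rest.min'_mem hrest)
      exact isSchreierMaximal_filter_le hF ht htmax hfF (not_le.1 hft)
        fun a ha hta => rest.min'_le a (mem_filter.2 ⟨ha, not_le.2 hta⟩)
    · exact hmaxr C (by rwa [List.dropLast_concat])
  · obtain ⟨L'', hL'', hU'', hlen''⟩ := exists_blocks_filter_not_le htmax hne hL' hU'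
    simpa using (Nat.succ_le_succ (hminr L'' hL'' hU'')).trans hlen''

lemma IsSchreierMaximal.lt_length_of_blockUnion_eq_insert {n : ℕ} {F : Finset ℕ} {m : ℕ}
    {L : List (Finset ℕ)} (hF : IsSchreierMaximal (n + 1) F) (hm : ∀ a ∈ F, a < m)
    (hL : IsBlockSeq (Schreier n) L) (hU : blockUnion L = insert m F) :
    sInf (F : Set ℕ) < L.length :=
  not_le.1 fun hlen => hF.2 m hm (mem_schreier_succ_iff.2
    ⟨L, hL, hU, by rwa [Finset.nat_sInf_insert_of_lt hF.nonempty hm]⟩)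

lemma IsSchreierMaximal.exists_blocks {n : ℕ} {F : Finset ℕ} (hF : IsSchreierMaximal (n + 1) F) :
    ∃ L, IsBlockSeq (Schreier n) L ∧ blockUnion L = F ∧ (∀ B ∈ L, IsSchreierMaximal n B) ∧
      L.length = sInf (F : Set ℕ) := by
  have hne := hF.nonempty
  obtain ⟨L, hL, rfl, hmaxL, hminL⟩ :=
    exists_greedy_blocks n F fun a => pos_of_mem_schreier hF.1
  set M := (blockUnion L).max' hne
  have hM : ∀ a ∈ blockUnion L, a < M + 1 :=
    fun a ha => Nat.lt_succ_of_le ((blockUnion L).le_max' a ha)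
  have hlen : L.length = sInf (blockUnion L : Set ℕ) := by
    obtain ⟨L₀, hL₀, hU₀, hlen₀⟩ := mem_schreier_succ_iff.1 hF.1
    refine le_antisymm ((hminL L₀ hL₀ hU₀).trans hlen₀) (Nat.le_of_lt_succ ?_)
    simpa using hF.lt_length_of_blockUnion_eq_insert hM (L := L ++ [{M + 1}])
      (IsBlockSeq.append_iff.2 ⟨hL, .singleton (singleton_mem_schreier M.succ_pos n)
        (singleton_nonempty _), fun a ha b hb => by
          rw [show b = M + 1 by simpa using hb]; exact hM a ha⟩)
      (by rw [insert_eq, union_comm, blockUnion_append, blockUnion_singleton])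
  refine ⟨L, hL, rfl, ?_, hlen⟩
  rcases L.eq_nil_or_concat' with rfl | ⟨L₁, B, rfl⟩
  · simp
  obtain ⟨hL₁, hB, hlt⟩ := IsBlockSeq.append_iff.1 hL
  rw [blockUnion_singleton] at hlt
  rw [List.dropLast_concat] at hmaxL
  obtain ⟨b, hb⟩ := hB.nonempty B (by simp)
  have hBmax : IsSchreierMaximal n B := by
    refine ⟨hB.mem B (by simp), fun m hm hmem => (hF.lt_length_of_blockUnion_eq_insert
      (m := m) (L := L₁ ++ [insert m B]) ?_ ?_ ?_).ne' (by simpa using hlen)⟩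
    · simp only [blockUnion_append, blockUnion_singleton, mem_union]
      rintro a (ha | ha)
      · exact (hlt a ha b hb).trans (hm b hb)
      · exact hm a ha
    · refine IsBlockSeq.append_iff.2 ⟨hL₁, .singleton hmem (insert_nonempty _ _), ?_⟩
      rw [blockUnion_singleton]
      intro a ha c hc
      rcases mem_insert.1 hc with rfl | hc
      · exact (hlt a ha b hb).trans (hm b hb)
      · exact hlt a ha c hc
    · simp [union_insert]
  intro C hC
  rcases List.mem_append.1 hC with hC | hC
  · exact hmaxL C hC
  · exact (List.mem_singleton.1 hC) ▸ hBmax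

lemma sum_apply_average {d : ℕ} (x : Fin d → ℕ →₀ ℝ) (G : Finset ℕ) :
    ∑ k ∈ G, ((d : ℝ)⁻¹ • ∑ i, x i) k = (d : ℝ)⁻¹ * ∑ i, ∑ k ∈ G, x i k := by
  simp only [Finsupp.smul_apply, Finsupp.finsetSum_apply, smul_eq_mul, ← mul_sum]
  rw [sum_comm]

structure IsConvexComb (x : ℕ →₀ ℝ) : Prop where
  nonneg : ∀ k, 0 ≤ x k
  sum_support : ∑ k ∈ x.support, x k = 1

namespace IsConvexComb

variable {x : ℕ →₀ ℝ}

lemma sum_eq_one_of_support_subset (hx : IsConvexComb x) {S : Finset ℕ} (h : x.support ⊆ S) :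
    ∑ k ∈ S, x k = 1 := by
  rw [← hx.sum_support]
  exact (sum_subset h fun k _ hk => Finsupp.notMem_support_iff.1 hk).symm

lemma sum_le_one (hx : IsConvexComb x) (G : Finset ℕ) : ∑ k ∈ G, x k ≤ 1 :=
  calc ∑ k ∈ G, x k ≤ ∑ k ∈ G ∪ x.support, x k :=
        sum_le_sum_of_subset_of_nonneg subset_union_left fun k _ _ => hx.nonneg k
    _ = 1 := hx.sum_eq_one_of_support_subset subset_union_right

lemma average {d : ℕ} (hd : 0 < d) {x : Fin d → ℕ →₀ ℝ} (hx : ∀ i, IsConvexComb (x i)) :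
    IsConvexComb ((d : ℝ)⁻¹ • ∑ i, x i) ∧
      ((d : ℝ)⁻¹ • ∑ i, x i).support = univ.biUnion fun i => (x i).support := by
  have hsupp : ((d : ℝ)⁻¹ • ∑ i, x i).support = univ.biUnion fun i => (x i).support := by
    ext k
    simp only [Finsupp.mem_support_iff, Finsupp.smul_apply, Finsupp.finsetSum_apply,
      smul_eq_mul, mem_biUnion, mem_univ, true_and, ne_eq, mul_eq_zero, inv_eq_zero,
      Nat.cast_eq_zero, hd.ne', false_or, sum_eq_zero_iff_of_nonneg fun i _ => (hx i).nonneg k]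
    simp
  refine ⟨⟨fun k => ?_, ?_⟩, hsupp⟩
  · simp only [Finsupp.smul_apply, Finsupp.finsetSum_apply, smul_eq_mul]
    exact mul_nonneg (by positivity) (sum_nonneg fun i _ => (hx i).nonneg k)
  · rw [sum_apply_average, hsupp, sum_congr rfl fun i _ => (hx i).sum_eq_one_of_support_subset
      (subset_biUnion_of_mem (fun i => (x i).support) (mem_univ i))]
    simp [hd.ne']

end IsConvexComb

lemma exists_uniform_convexComb {F : Finset ℕ} (hF : F.Nonempty) :
    ∃ x : ℕ →₀ ℝ, IsConvexComb x ∧ x.support = F ∧ ∀ k, x k ≤ (#F : ℝ)⁻¹ := by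
  classical
  have hc : (0 : ℝ) < (#F : ℝ)⁻¹ := by simpa using hF.card_pos
  set x := Finsupp.indicator F fun _ _ => (#F : ℝ)⁻¹
  have hx : ∀ k, x k = if k ∈ F then (#F : ℝ)⁻¹ else 0 := fun k => by
    simp [x, Finsupp.indicator_apply]
  have hsupp : x.support = F := by
    ext k
    rw [Finsupp.mem_support_iff, hx]
    split_ifs with h <;> simp [h, hc.ne']
  refine ⟨x, ⟨fun k => ?_, ?_⟩, hsupp, fun k => ?_⟩
  · rw [hx]; split_ifs <;> [exact hc.le; exact le_rfl]
  · rw [hsupp, sum_congr rfl fun k hk => (hx k).trans (if_pos hk)]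
    simp [hF.card_pos.ne']
  · rw [hx]; split_ifs <;> [exact le_rfl; exact hc.le]

lemma card_filter_inter_nonempty_le {d l : ℕ} {A : Fin d → Finset ℕ} {P : Fin l → Finset ℕ}
    (hA : ∀ i j, i < j → FinsetLT (A i) (A j)) (hP : ∀ i j, i < j → FinsetLT (P i) (P j)) :
    #{p : Fin d × Fin l | (A p.1 ∩ P p.2).Nonempty} ≤ d + l := by
  -- `(i, j) ↦ i + j` is injective on meeting pairs: two of them on one antidiagonal would be
  -- ordered one way by `A` and the other way by `P`.
  calc _ ≤ #(range (d + l)) := card_le_card_of_injOn (fun p => (p.1 : ℕ) + p.2) ?_ ?_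
    _ = d + l := card_range _
  · intro p _
    simp only [coe_range, Set.mem_Iio]
    omega
  · rintro p hp q hq (hpq : (p.1 : ℕ) + p.2 = q.1 + q.2)
    obtain ⟨a, ha⟩ := (mem_filter.1 hp).2
    obtain ⟨b, hb⟩ := (mem_filter.1 hq).2
    rw [mem_inter] at ha hb
    rcases lt_trichotomy p.1 q.1 with h | h | h
    · have h' : q.2 < p.2 := Fin.lt_def.2 (by rw [Fin.lt_def] at h; omega)
      exact absurd (hA _ _ h a ha.1 b hb.1) (hP _ _ h' b hb.2 a ha.2).not_gt
    · exact Prod.ext h (Fin.ext (by rw [h] at hpq; omega))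
    · have h' : p.2 < q.2 := Fin.lt_def.2 (by rw [Fin.lt_def] at h; omega)
      exact absurd (hA _ _ h b hb.1 a ha.1) (hP _ _ h' a ha.2 b hb.2).not_gt

lemma IsBlockSeq.sum_blockUnion {𝒜 : Set (Finset ℕ)} {L : List (Finset ℕ)} (hL : IsBlockSeq 𝒜 L)
    (f : ℕ → ℝ) : ∑ k ∈ blockUnion L, f k = ∑ j, ∑ k ∈ L.get j, f k := by
  classical
  conv_lhs => rw [← List.ofFn_get L, blockUnion_ofFn]
  refine sum_biUnion fun i _ j _ hij => disjoint_left.2 fun a hai haj => ?_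
  rcases lt_or_gt_of_ne hij with h | h
  · exact (hL.get_lt h a hai a haj).false
  · exact (hL.get_lt h a haj a hai).false

lemma sum_sum_le_of_le_ite {d l : ℕ} {s : Fin d → Fin l → ℝ} {p : Fin d → Fin l → Prop}
    [∀ i j, Decidable (p i j)] {Q : ℝ} (hQ : 0 ≤ Q) (i₀ : Fin d) (hrow : ∑ j, s i₀ j ≤ 1)
    (hle : ∀ i ≠ i₀, ∀ j, s i j ≤ if p i j then Q else 0) :
    ∑ i, ∑ j, s i j ≤ 1 + #{q : Fin d × Fin l | p q.1 q.2} * Q := by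
  have hite : ∀ i j, 0 ≤ if p i j then Q else 0 := fun i j => by
    split_ifs <;> [exact hQ; exact le_rfl]
  calc ∑ i, ∑ j, s i j = ∑ j, s i₀ j + ∑ i ∈ univ.erase i₀, ∑ j, s i j :=
        (add_sum_erase _ _ (mem_univ _)).symm
    _ ≤ 1 + ∑ i, ∑ j, if p i j then Q else 0 :=
        add_le_add hrow ((sum_le_sum fun i hi => sum_le_sum fun j _ =>
          hle i (ne_of_mem_erase hi) j).trans (sum_le_sum_of_subset_of_nonneg (subset_univ _)
            fun i _ _ => sum_nonneg fun j _ => hite i j))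
    _ = 1 + #{q : Fin d × Fin l | p q.1 q.2} * Q := by
        rw [← Fintype.sum_prod_type (fun q => if p q.1 q.2 then Q else 0), ← sum_filter,
          sum_const, nsmul_eq_mul]

/-- `s i j` stands for the mass that a convex combination on the block `B i` puts on the piece
`P j` of a set `G` with `l ≤ min G`. The first block meeting `G` carries mass at most `1`; every
later block starts beyond `min G`, so each of its entries is at most `C / max d (l + 1)`, and at
most `d + l` entries are nonzero. -/
lemma sum_sum_le_of_successive {d l : ℕ} {C : ℝ} (hC : 0 ≤ C)
    {B : Fin d → Finset ℕ} {P : Fin l → Finset ℕ}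
    (hB : ∀ i j, i < j → FinsetLT (B i) (B j)) (hBne : ∀ i, (B i).Nonempty)
    (hP : ∀ i j, i < j → FinsetLT (P i) (P j))
    (hBmin : ∀ i, d ≤ sInf (B i : Set ℕ)) (hPmin : ∀ j, ∀ a ∈ P j, l ≤ a)
    {s : Fin d → Fin l → ℝ} (hrow : ∀ i, ∑ j, s i j ≤ 1)
    (hsupp : ∀ i j, s i j ≠ 0 → (B i ∩ P j).Nonempty)
    (hle : ∀ i j, s i j ≤ C / sInf (B i : Set ℕ)) :
    ∑ i, ∑ j, s i j ≤ 1 + 2 * C := by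
  classical
  set I := univ.filter fun i => ∃ j, s i j ≠ 0
  rcases I.eq_empty_or_nonempty with hI | hI
  · have hzero : ∀ i j, s i j = 0 := fun i j => by
      by_contra h
      exact (filter_eq_empty_iff.1 hI) (mem_univ i) ⟨j, h⟩
    simp only [hzero, sum_const_zero]
    linarith
  set i₀ := I.min' hI
  obtain ⟨j₀, hj₀⟩ := (mem_filter.1 (I.min'_mem hI)).2
  obtain ⟨g, hg⟩ := hsupp _ _ hj₀
  set K := max d (l + 1)
  have hK : (0 : ℝ) < K := by positivity
  have hlate : ∀ i, i₀ < i → K ≤ sInf (B i : Set ℕ) := fun i hi => by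
    have hgB := hB i₀ i hi g (mem_inter.1 hg).1 _ (hBne i).csInf_mem
    have := hPmin j₀ g (mem_inter.1 hg).2
    exact max_le (hBmin i) (by omega)
  have hentry : ∀ i ≠ i₀, ∀ j, s i j ≤ if (B i ∩ P j).Nonempty then C / K else 0 := by
    intro i hi j
    by_cases h : s i j = 0
    · rw [h]
      split_ifs <;> [exact div_nonneg hC hK.le; exact le_rfl]
    · have hi' : i₀ < i :=
        lt_of_le_of_ne (I.min'_le i (mem_filter.2 ⟨mem_univ _, j, h⟩)) (Ne.symm hi)
      rw [if_pos (hsupp i j h)]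
      exact (hle i j).trans (div_le_div_of_nonneg_left hC hK (by exact_mod_cast hlate i hi'))
  have hpairs : (#{q : Fin d × Fin l | (B q.1 ∩ P q.2).Nonempty} : ℝ) ≤ 2 * K := by
    exact_mod_cast (card_filter_inter_nonempty_le hB hP).trans (by omega)
  calc ∑ i, ∑ j, s i j ≤ 1 + #{q : Fin d × Fin l | (B q.1 ∩ P q.2).Nonempty} * (C / K) :=
        sum_sum_le_of_le_ite (p := fun i j => (B i ∩ P j).Nonempty) (div_nonneg hC hK.le) i₀
          (hrow i₀) hentry
    _ ≤ 1 + 2 * K * (C / K) := by gcongr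
    _ = 1 + 2 * C := by field_simp

lemma IsSchreierMaximal.exists_convexComb_succ {n : ℕ} {C : ℝ} (hC : 0 ≤ C)
    (ih : ∀ B, IsSchreierMaximal (n + 1) B → ∃ x, IsConvexComb x ∧ x.support = B ∧
      ∀ H ∈ Schreier n, ∑ k ∈ H, x k ≤ C / sInf (B : Set ℕ))
    {F : Finset ℕ} (hF : IsSchreierMaximal (n + 2) F) :
    ∃ x, IsConvexComb x ∧ x.support = F ∧
      ∀ G ∈ Schreier (n + 1), ∑ k ∈ G, x k ≤ (1 + 2 * C) / sInf (F : Set ℕ) := by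
  have hne := hF.nonempty
  obtain ⟨L, hL, rfl, hmax, hlen⟩ := hF.exists_blocks
  have hd : 0 < L.length := List.length_pos_iff.2 fun h => by simp [h] at hne
  have hLne : ∀ i, (L.get i).Nonempty := fun i => hL.nonempty _ (L.get_mem i)
  choose x hx hsupp hbound using fun i : Fin L.length => ih (L.get i) (hmax _ (L.get_mem i))
  obtain ⟨hxavg, hsuppavg⟩ := IsConvexComb.average hd hx
  refine ⟨_, hxavg, ?_, fun G hG => ?_⟩
  · rw [hsuppavg, ← blockUnion_ofFn]
    simp only [hsupp, List.ofFn_get]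
  obtain ⟨P, hP, rfl, hPlen⟩ := mem_schreier_succ_iff.1 hG
  rw [sum_apply_average, ← hlen, div_eq_inv_mul]
  gcongr
  have hrow : ∀ i, ∑ k ∈ blockUnion P, x i k = ∑ j, ∑ k ∈ P.get j, x i k :=
    fun i => hP.sum_blockUnion _
  simp only [hrow]
  refine sum_sum_le_of_successive hC (fun i j => hL.get_lt) hLne (fun i j => hP.get_lt)
    (fun i => hlen ▸ Finset.nat_sInf_mono (subset_blockUnion (L.get_mem i)) (hLne i))
    (fun j a ha => hPlen.trans (Finset.nat_sInf_le (subset_blockUnion (P.get_mem j) ha)))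
    (fun i => (hrow i).symm.trans_le ((hx i).sum_le_one _)) (fun i j h => ?_)
    (fun i j => hbound i _ (hP.mem _ (P.get_mem j)))
  rw [← hsupp i, inter_comm, ← not_disjoint_iff_nonempty_inter]
  exact fun hdisj => h (sum_eq_zero fun k hk =>
    Finsupp.notMem_support_iff.1 (disjoint_left.1 hdisj hk))

lemma IsSchreierMaximal.card_eq_sInf {F : Finset ℕ} (hF : IsSchreierMaximal 1 F) :
    #F = sInf (F : Set ℕ) := by
  have hne := hF.nonempty
  have hlt : ∀ a ∈ F, a < F.max' hne + 1 := fun a ha => Nat.lt_succ_of_le (F.le_max' a ha)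
  refine le_antisymm (mem_schreierOne_iff.1 hF.1) (not_lt.1 fun h => hF.2 _ hlt ?_)
  change _ ∈ SchreierOne
  rw [mem_schreierOne_iff, card_insert_of_notMem fun hm => (hlt _ hm).false,
    Finset.nat_sInf_insert_of_lt hne hlt]
  omega

lemma IsSchreierMaximal.exists_convexComb :
    ∀ (n : ℕ) {F : Finset ℕ}, IsSchreierMaximal (n + 1) F →
      ∃ x, IsConvexComb x ∧ x.support = F ∧
        ∀ G ∈ Schreier n, ∑ k ∈ G, x k ≤ (2 ^ (n + 1) - 1) / sInf (F : Set ℕ)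
  | 0, F, hF => by
    obtain ⟨x, hx, hsupp, hxle⟩ := exists_uniform_convexComb hF.nonempty
    refine ⟨x, hx, hsupp, fun G (hG : #G ≤ 1) => ?_⟩
    calc ∑ k ∈ G, x k ≤ #G • (#F : ℝ)⁻¹ := sum_le_card_nsmul _ _ _ fun k _ => hxle k
      _ ≤ 1 • (#F : ℝ)⁻¹ := by gcongr
      _ = (2 ^ (0 + 1) - 1) / sInf (F : Set ℕ) := by rw [← hF.card_eq_sInf]; norm_num
  | n + 1, F, hF => by
    have hC : (0 : ℝ) ≤ 2 ^ (n + 1) - 1 := sub_nonneg.2 (one_le_pow₀ one_le_two)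
    obtain ⟨x, hx, hsupp, hbound⟩ :=
      hF.exists_convexComb_succ hC fun B hB => IsSchreierMaximal.exists_convexComb n hB
    refine ⟨x, hx, hsupp, fun G hG => (hbound G hG).trans_eq ?_⟩
    ring

theorem stmt_8_general (M : Set ℕ) (n : ℕ) (hn : 1 ≤ n) (ε : ℝ) (hε : 0 < ε) :
    ∃ k : ℕ, ∀ F : Finset ℕ, ↑F ⊆ M → F ∈ Schreier n →
      (∀ m : ℕ, (∀ a ∈ F, a < m) → insert m F ∉ Schreier n) →
      (∀ a ∈ F, k ≤ a) →
      ∃ x : ℕ →₀ ℝ, IsBSCCVec n ε x ∧ x.support = F := by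
  obtain ⟨n, rfl⟩ := Nat.exists_eq_add_of_le' hn
  obtain ⟨k, hk⟩ := exists_nat_gt ((2 ^ (n + 1) - 1) / ε)
  refine ⟨k, fun F _ hFS hFmax hFk => ?_⟩
  have hF : IsSchreierMaximal (n + 1) F := ⟨hFS, hFmax⟩
  obtain ⟨x, hx, hsupp, hbound⟩ := hF.exists_convexComb n
  have hmin := hF.nonempty.csInf_mem
  have hsmall : (2 ^ (n + 1) - 1) / ((sInf (F : Set ℕ) : ℕ) : ℝ) < ε := by
    rw [div_lt_iff₀ (by exact_mod_cast pos_of_mem_schreier hFS hmin)]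
    calc (2 : ℝ) ^ (n + 1) - 1 < k * ε := (div_lt_iff₀ hε).1 hk
      _ ≤ ε * ((sInf (F : Set ℕ) : ℕ) : ℝ) := by
        rw [mul_comm]
        gcongr
        exact_mod_cast hFk _ hmin
  exact ⟨x, ⟨hx.nonneg, hx.sum_support, hsupp ▸ hFS,
    fun G _ hG => (hbound G hG).trans_lt hsmall⟩, hsupp⟩

/-- for `M ⊆ ℕ` infinite, `n ≥ 1`, `ε > 0`, there is `k ∈ ℕ` such that every
finite `F ⊆ M` that is maximal in `S_n` and satisfies `k ≤ min F` supports an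
`(n, ε)`-basic special convex combination. -/
theorem stmt_8 (M : Set ℕ) (hM : M.Infinite) (n : ℕ) (hn : 1 ≤ n) (ε : ℝ) (hε : 0 < ε) :
    ∃ k : ℕ, ∀ F : Finset ℕ, ↑F ⊆ M → F ∈ Schreier n →
      (∀ m : ℕ, (∀ a ∈ F, a < m) → insert m F ∉ Schreier n) →
      (∀ a ∈ F, k ≤ a) →
      ∃ x : ℕ →₀ ℝ, IsBSCCVec n ε x ∧ x.support = F :=
  stmt_8_general M n hn ε hε
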